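/- Let F : C ⥤ X be a faithful essential localization, and assume that every pullback stable essential monomorphism in X is an isomorphism. Then F is a localization functor (in the sense of categories of fractions) of C with respect to the class W of pullback stable essential monomorphisms of C; that is, F inverts exactly the morphisms of W and exhibits X as the category of fractions C[W⁻¹] (the spectral category Spec(C)). In particular, Spec(C) is equivalent to X. -/

import Mathlib

open CategoryTheory Limits

/-- A morphism `m` is an essential monomorphism if it is a monomorphism and every
morphism `f` such that `m ≫ f` is a monomorphism is itself a monomorphism. -/
def IsEssentialMono {C : Type*} [CategoryTheory.Category C] {S A : C} (m : S ⟶ A) : Prop :=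
  CategoryTheory.Mono m ∧
    ∀ ⦃B : C⦄ (f : A ⟶ B), CategoryTheory.Mono (m ≫ f) → CategoryTheory.Mono f

/-- A morphism `m : S ⟶ A` is a pullback stable essential monomorphism if for every
morphism `u : X ⟶ A` the pullback projection `S ×_A X ⟶ X` of `m` along `u` is an
essential monomorphism. -/
def IsStableEssentialMono {C : Type*} [CategoryTheory.Category C]
    [CategoryTheory.Limits.HasPullbacks C] {S A : C} (m : S ⟶ A) : Prop :=
  ∀ ⦃X : C⦄ (u : X ⟶ A), IsEssentialMono (CategoryTheory.Limits.pullback.snd m u)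

/-- The class of pullback stable essential monomorphisms, as a `MorphismProperty`. -/
def stableEssentialMonos (C : Type*) [Category C] [HasPullbacks C] :
    CategoryTheory.MorphismProperty C :=
  fun _ _ m => IsStableEssentialMono m

/-!
Since `G` is fully faithful, `F` inverts every unit component `η_A`, and a faithful
pullback-preserving functor inverting a morphism makes all its pullbacks essential monomorphisms,
so each `η_A` lies in `W`. Conversely, for `m ∈ W` the naturality square `m ≫ η_A = η_S ≫ G (F m)`
and the closure of `W` under composition and left cancellation put `G (F m)` in `W`; as `G` is
faithful and preserves pullbacks, `F m` is a pullback stable essential monomorphism of `X`, hence an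
isomorphism. So `W` is exactly the class of morphisms inverted by `F`, and a left adjoint with fully
faithful right adjoint is the localization at the morphisms it inverts.
-/

namespace IsEssentialMono

variable {C : Type*} [Category C]

lemma of_isIso {A B : C} (e : A ⟶ B) [IsIso e] : IsEssentialMono e := by
  refine ⟨inferInstance, fun _ f hf => ?_⟩
  simpa using mono_comp (inv e) (e ≫ f)

lemma comp {A B D : C} {u : A ⟶ B} {v : B ⟶ D}
    (hu : IsEssentialMono u) (hv : IsEssentialMono v) : IsEssentialMono (u ≫ v) := by
  have := hu.1
  have := hv.1
  refine ⟨mono_comp _ _, fun _ f hf => hv.2 f (hu.2 (v ≫ f) ?_)⟩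
  simpa using hf

lemma of_comp {A B D : C} {u : A ⟶ B} {v : B ⟶ D}
    (hu : IsEssentialMono u) (huv : IsEssentialMono (u ≫ v)) : IsEssentialMono v := by
  refine ⟨hu.2 v huv.1, fun _ f hf => huv.2 f ?_⟩
  have := hu.1
  simpa using mono_comp u (v ≫ f)

variable {D : Type*} [Category D]

lemma of_isIso_map (F : C ⥤ D) [F.Faithful] [F.PreservesMonomorphisms]
    {A B : C} (p : A ⟶ B) [IsIso (F.map p)] : IsEssentialMono p := by
  refine ⟨F.mono_of_mono_map inferInstance, fun _ f hf => F.mono_of_mono_map ?_⟩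
  have : F.map f = inv (F.map p) ≫ F.map (p ≫ f) := by simp
  rw [this]
  exact mono_comp _ _

lemma of_map (G : C ⥤ D) [G.Faithful] [G.PreservesMonomorphisms]
    {A B : C} {p : A ⟶ B} (h : IsEssentialMono (G.map p)) : IsEssentialMono p := by
  refine ⟨G.mono_of_mono_map h.1, fun _ f hf => G.mono_of_mono_map (h.2 _ ?_)⟩
  rw [← G.map_comp]
  exact G.map_mono _

end IsEssentialMono

namespace IsStableEssentialMono

variable {C : Type*} [Category C] [HasPullbacks C]

lemma comp {S M A : C} {a : S ⟶ M} {b : M ⟶ A}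
    (ha : IsStableEssentialMono a) (hb : IsStableEssentialMono b) :
    IsStableEssentialMono (a ≫ b) := fun _ u => by
  rw [← pullbackRightPullbackFstIso_inv_snd_snd b u a]
  exact (IsEssentialMono.of_isIso _).comp ((ha _).comp (hb u))

lemma of_comp {S M A : C} {a : S ⟶ M} {b : M ⟶ A}
    (ha : IsStableEssentialMono a) (hab : IsStableEssentialMono (a ≫ b)) :
    IsStableEssentialMono b := fun _ u => by
  refine (ha (pullback.fst b u)).of_comp ?_
  rw [← pullbackRightPullbackFstIso_hom_snd b u a]
  exact (IsEssentialMono.of_isIso _).comp (hab u)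

variable {D : Type*} [Category D] [HasPullbacks D]

lemma of_isIso_map (F : C ⥤ D) [F.Faithful] [PreservesLimitsOfShape WalkingCospan F]
    {S A : C} (m : S ⟶ A) [IsIso (F.map m)] : IsStableEssentialMono m := fun _ u => by
  have : IsIso (F.map (pullback.snd m u)) := by
    rw [← PreservesPullback.iso_hom_snd F m u]
    infer_instance
  exact IsEssentialMono.of_isIso_map F _

lemma of_map (G : C ⥤ D) [G.Faithful] [PreservesLimitsOfShape WalkingCospan G]
    {S A : C} {n : S ⟶ A} (h : IsStableEssentialMono (G.map n)) :
    IsStableEssentialMono n := fun _ u => by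
  refine IsEssentialMono.of_map G ?_
  rw [← PreservesPullback.iso_hom_snd G n u]
  exact (IsEssentialMono.of_isIso _).comp (h (G.map u))

end IsStableEssentialMono

namespace CategoryTheory.Adjunction

variable {C : Type*} [Category C] {X : Type*} [Category X] [HasFiniteLimits C]
  {F : C ⥤ X} {G : X ⥤ C} (adj : F ⊣ G) [PreservesFiniteLimits F] [F.Faithful]
  [G.Full] [G.Faithful] [HasFiniteLimits X]

include adj in
lemma isStableEssentialMono_unit_app (A : C) : IsStableEssentialMono (adj.unit.app A) :=
  IsStableEssentialMono.of_isIso_map F _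

include adj in
lemma isIso_map_of_isStableEssentialMono
    (hX : ∀ ⦃S A : X⦄ (n : S ⟶ A), IsStableEssentialMono n → IsIso n)
    {S A : C} {m : S ⟶ A} (hm : IsStableEssentialMono m) : IsIso (F.map m) := by
  have : PreservesLimitsOfSize.{0, 0} G := adj.rightAdjoint_preservesLimits
  have hη : IsStableEssentialMono (adj.unit.app S ≫ G.map (F.map m)) := by
    have h := hm.comp (adj.isStableEssentialMono_unit_app A)
    rwa [← adj.unit_naturality m] at h
  exact hX _ (.of_map G ((adj.isStableEssentialMono_unit_app S).of_comp hη))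

include adj in
lemma stableEssentialMonos_eq_inverseImage
    (hX : ∀ ⦃S A : X⦄ (n : S ⟶ A), IsStableEssentialMono n → IsIso n) :
    stableEssentialMonos C = (MorphismProperty.isomorphisms X).inverseImage F := by
  ext S A m
  refine ⟨adj.isIso_map_of_isStableEssentialMono hX, fun (_ : IsIso (F.map m)) => ?_⟩
  exact IsStableEssentialMono.of_isIso_map F m

end CategoryTheory.Adjunction

theorem isLocalization_stableEssentialMonos_general
    {C : Type*} [Category C] {X : Type*} [Category X]
    [HasFiniteLimits C] [HasFiniteLimits X]
    (F : C ⥤ X) (G : X ⥤ C)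
    (adj : F ⊣ G) [PreservesFiniteLimits F] [F.Faithful] [G.Full] [G.Faithful]
    (hX : ∀ ⦃S A : X⦄ (n : S ⟶ A), IsStableEssentialMono n → IsIso n) :
    (∀ ⦃S A : C⦄ (m : S ⟶ A), stableEssentialMonos C m ↔ IsIso (F.map m)) ∧
      F.IsLocalization (stableEssentialMonos C) := by
  rw [adj.stableEssentialMonos_eq_inverseImage hX]
  exact ⟨fun _ _ _ => Iff.rfl, adj.isLocalization⟩

/-- Let `F : C ⥤ X` be a faithful essential localization such that every pullback stable
essential monomorphism in `X` is an isomorphism. Then `F` inverts exactly the pullback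
stable essential monomorphisms of `C`, and `F` exhibits `X` as the category of fractions
of `C` with respect to this class, i.e. as the spectral category `Spec(C)`; in particular
`Spec(C)` is equivalent to `X`. -/
theorem isLocalization_stableEssentialMonos
    {C : Type*} [Category C] {X : Type*} [Category X]
    [HasFiniteLimits C] [HasFiniteLimits X]
    (F : C ⥤ X) (G : X ⥤ C) (H : X ⥤ C)
    (adj : F ⊣ G) [PreservesFiniteLimits F] [F.Faithful] [G.Full] [G.Faithful]
    (adj' : H ⊣ F)
    (hX : ∀ ⦃S A : X⦄ (n : S ⟶ A), IsStableEssentialMono n → IsIso n) :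
    (∀ ⦃S A : C⦄ (m : S ⟶ A), stableEssentialMonos C m ↔ IsIso (F.map m)) ∧
      F.IsLocalization (stableEssentialMonos C) :=
  isLocalization_stableEssentialMonos_general F G adj hX
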